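/- arXiv:0903.0888 — 2 statements merged into one kernel-verified Lean document; each statement's English description precedes it below -/
import Mathlib

section
/- For every positive integer i, the function x ↦ x^(i+1) · |ψ^(i)(x)| is strictly increasing on (0, ∞), where ψ^(i) denotes the i-th polygamma function (i-th derivative of the digamma function). -/
/-!
Both `digamma` and `digammaSeries x = ∑ (1/(n+1) - 1/(n+x))` are monotone on `(0, ∞)` and satisfy
`f (x + 1) = f x + 1/x`; this forces them to differ by a constant, since the difference is
`1`-periodic while its oscillation on `[x + N, x + N + 1]` is at most `1/(x + N) → 0`.
Differentiating the series term by term gives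
`ψ^(j+1)(x) = (-1)^j (j+1)! ∑ 1/(n+x)^(j+2)`, hence
`x^(j+2) |ψ^(j+1)(x)| = (j+1)! ∑ (x/(n+x))^(j+2)`, a sum of increasing functions of `x`,
strictly increasing for `n ≥ 1`.
-/

noncomputable def digamma : ℝ → ℝ := deriv (fun x => Real.log (Real.Gamma x))

noncomputable def polygamma (i : ℕ) : ℝ → ℝ := iteratedDeriv i digamma

open Set Filter Topology
open scoped Nat

noncomputable def hurwitzSeries (k : ℕ) (x : ℝ) : ℝ := ∑' n : ℕ, 1 / ((n : ℝ) + x) ^ k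

noncomputable def digammaSeries (x : ℝ) : ℝ := ∑' n : ℕ, (1 / ((n : ℝ) + 1) - 1 / ((n : ℝ) + x))

lemma summable_one_div_nat_add_pow {k : ℕ} (hk : 2 ≤ k) {x : ℝ} (hx : 0 < x) :
    Summable fun n : ℕ => 1 / ((n : ℝ) + x) ^ k :=
  ((Real.summable_one_div_nat_add_rpow x k).2 (by exact_mod_cast hk)).congr fun n => by
    rw [abs_of_pos (by positivity), Real.rpow_natCast]

lemma hasDerivAt_one_div_nat_add_pow (k n : ℕ) {y : ℝ} (hy : 0 < y) :
    HasDerivAt (fun z => 1 / ((n : ℝ) + z) ^ k) (-k * (1 / ((n : ℝ) + y) ^ (k + 1))) y := by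
  have hne : (n : ℝ) + y ≠ 0 := by positivity
  have h := (hasDerivAt_zpow (-(k : ℤ)) _ (Or.inl hne)).comp_const_add (n : ℝ) y
  simp only [zpow_neg, zpow_natCast, ← one_div] at h
  refine h.congr_deriv ?_
  rw [show -(k : ℤ) - 1 = -((k + 1 : ℕ) : ℤ) by push_cast; ring, zpow_neg, zpow_natCast]
  push_cast; ring

lemma norm_one_div_nat_add_pow_le {k : ℕ} {ε y : ℝ} (hε : 0 < ε) (hy : y ∈ Ioi ε) (n : ℕ) :
    ‖1 / ((n : ℝ) + y) ^ k‖ ≤ 1 / ((n : ℝ) + ε) ^ k := by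
  have hy0 : 0 < y := hε.trans hy
  rw [Real.norm_of_nonneg (by positivity)]
  gcongr
  exact le_of_lt hy

lemma hurwitzSeries_pos {k : ℕ} (hk : 2 ≤ k) {x : ℝ} (hx : 0 < x) : 0 < hurwitzSeries k x :=
  (summable_one_div_nat_add_pow hk hx).tsum_pos (fun n => by positivity) 0 (by positivity)

lemma hasDerivAt_hurwitzSeries {k : ℕ} (hk : 2 ≤ k) {x : ℝ} (hx : 0 < x) :
    HasDerivAt (hurwitzSeries k) (-k * hurwitzSeries (k + 1) x) x := by
  have hx2 : 0 < x / 2 := by positivity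
  have hbound : ∀ (n : ℕ) (y : ℝ), y ∈ Ioi (x / 2) →
      ‖-(k : ℝ) * (1 / ((n : ℝ) + y) ^ (k + 1))‖ ≤ k * (1 / ((n : ℝ) + x / 2) ^ (k + 1)) :=
    fun n y hy => by
      rw [norm_mul, norm_neg, Real.norm_natCast]
      exact mul_le_mul_of_nonneg_left (norm_one_div_nat_add_pow_le hx2 hy n) k.cast_nonneg
  have h := hasDerivAt_tsum_of_isPreconnected
    ((summable_one_div_nat_add_pow (by omega) hx2).mul_left _) isOpen_Ioi isPreconnected_Ioi
    (fun n y hy => hasDerivAt_one_div_nat_add_pow k n (hx2.trans hy)) hbound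
    (half_lt_self hx) (summable_one_div_nat_add_pow hk hx) (half_lt_self hx)
  rwa [tsum_mul_left] at h

lemma hasDerivAt_digammaSeries_term (n : ℕ) {y : ℝ} (hy : 0 < y) :
    HasDerivAt (fun z => 1 / ((n : ℝ) + 1) - 1 / ((n : ℝ) + z)) (1 / ((n : ℝ) + y) ^ 2) y := by
  simpa using (hasDerivAt_one_div_nat_add_pow 1 n hy).const_sub (1 / ((n : ℝ) + 1))

lemma summable_digammaSeries {x : ℝ} (hx : 0 < x) :
    Summable fun n : ℕ => 1 / ((n : ℝ) + 1) - 1 / ((n : ℝ) + x) := by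
  have hε : 0 < min x 1 / 2 := by positivity
  -- summability spreads from `y₀ = 1`, where every term vanishes, via the derivative bound
  exact summable_of_summable_hasDerivAt_of_isPreconnected
    (summable_one_div_nat_add_pow le_rfl hε) isOpen_Ioi isPreconnected_Ioi
    (fun n y hy => hasDerivAt_digammaSeries_term n (hε.trans hy))
    (fun n _ hy => norm_one_div_nat_add_pow_le hε hy n)
    (y₀ := 1) (by simp only [mem_Ioi]; linarith [min_le_right x 1]) (by simp)
    (by simp only [mem_Ioi]; linarith [min_le_left x 1])

lemma hasDerivAt_digammaSeries {x : ℝ} (hx : 0 < x) :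
    HasDerivAt digammaSeries (hurwitzSeries 2 x) x :=
  hasDerivAt_tsum_of_isPreconnected
    (summable_one_div_nat_add_pow le_rfl (half_pos hx)) isOpen_Ioi isPreconnected_Ioi
    (fun n _ hy => hasDerivAt_digammaSeries_term n ((half_pos hx).trans hy))
    (fun n _ hy => norm_one_div_nat_add_pow_le (half_pos hx) hy n)
    (half_lt_self hx) (summable_digammaSeries hx) (half_lt_self hx)

lemma hasSum_sub_succ_of_tendsto {f : ℕ → ℝ} {l : ℝ} (hf : Tendsto f atTop (𝓝 l))
    (hs : Summable fun n => f n - f (n + 1)) : HasSum (fun n => f n - f (n + 1)) (f 0 - l) := by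
  convert hs.hasSum
  refine tendsto_nhds_unique ?_ hs.hasSum.tendsto_sum_nat
  exact (tendsto_const_nhds.sub hf).congr fun N => (Finset.sum_range_sub' f N).symm

lemma digammaSeries_add_one {x : ℝ} (hx : 0 < x) :
    digammaSeries (x + 1) = digammaSeries x + 1 / x := by
  have hdiff : ∀ n : ℕ, (1 / ((n : ℝ) + 1) - 1 / ((n : ℝ) + (x + 1)))
      - (1 / ((n : ℝ) + 1) - 1 / ((n : ℝ) + x))
      = 1 / ((n : ℝ) + x) - 1 / (((n + 1 : ℕ) : ℝ) + x) := fun n => by push_cast; ring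
  have hlim : Tendsto (fun n : ℕ => 1 / ((n : ℝ) + x)) atTop (𝓝 0) := by
    simp only [one_div]
    exact (tendsto_atTop_add_const_right _ x tendsto_natCast_atTop_atTop).inv_tendsto_atTop
  have htel := hasSum_sub_succ_of_tendsto hlim
    (((summable_digammaSeries (by positivity)).sub (summable_digammaSeries hx)).congr hdiff)
  refine eq_add_of_sub_eq' ?_
  rw [digammaSeries, digammaSeries, ← Summable.tsum_sub (summable_digammaSeries (by positivity))
    (summable_digammaSeries hx), tsum_congr hdiff, htel.tsum_eq]
  simp

lemma digammaSeries_monotoneOn : MonotoneOn digammaSeries (Ioi 0) := by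
  intro x (hx : 0 < x) y (hy : 0 < y) hxy
  refine (summable_digammaSeries hx).tsum_le_tsum (fun n => ?_) (summable_digammaSeries hy)
  gcongr

lemma differentiableAt_log_Gamma {x : ℝ} (hx : 0 < x) :
    DifferentiableAt ℝ (fun y => Real.log (Real.Gamma y)) x :=
  (Real.differentiableAt_Gamma fun m => by linarith [(m.cast_nonneg : (0 : ℝ) ≤ m)]).log
    (Real.Gamma_pos_of_pos hx).ne'

lemma digamma_add_one {x : ℝ} (hx : 0 < x) : digamma (x + 1) = digamma x + 1 / x := by
  rw [digamma, ← deriv_comp_add_const, one_div, ← Real.deriv_log,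
    ← deriv_add (differentiableAt_log_Gamma hx) (Real.differentiableAt_log hx.ne')]
  refine EventuallyEq.deriv_eq ?_
  filter_upwards [eventually_gt_nhds hx] with y hy
  rw [Real.Gamma_add_one hy.ne', Real.log_mul hy.ne' (Real.Gamma_pos_of_pos hy).ne', add_comm,
    Pi.add_apply]

lemma digamma_monotoneOn : MonotoneOn digamma (Ioi 0) :=
  Real.convexOn_log_Gamma.monotoneOn_deriv fun _ hx => differentiableAt_log_Gamma hx

section RecurrenceUniqueness

variable {f g h : ℝ → ℝ}

lemma abs_sub_sub_sub_le_of_monotoneOn (hf : MonotoneOn f (Ioi 0)) (hg : MonotoneOn g (Ioi 0))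
    (hfh : ∀ x > 0, f (x + 1) = f x + h x) (hgh : ∀ x > 0, g (x + 1) = g x + h x)
    {x y : ℝ} (hx : 0 < x) (hxy : x ≤ y) (hyx : y ≤ x + 1) :
    |(f y - g y) - (f x - g x)| ≤ h x := by
  have hy : 0 < y := hx.trans_le hxy
  have hf₁ := hf hx hy hxy
  have hf₂ := hf hy (by simp only [mem_Ioi]; linarith) hyx
  have hg₁ := hg hx hy hxy
  have hg₂ := hg hy (by simp only [mem_Ioi]; linarith) hyx
  rw [hfh x hx] at hf₂
  rw [hgh x hx] at hg₂
  rw [abs_le]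
  constructor <;> linarith

lemma sub_add_nat_eq_of_add_one (hfh : ∀ x > 0, f (x + 1) = f x + h x)
    (hgh : ∀ x > 0, g (x + 1) = g x + h x) {x : ℝ} (hx : 0 < x) (N : ℕ) :
    f (x + N) - g (x + N) = f x - g x := by
  induction N with
  | zero => simp
  | succ N ih =>
    rw [Nat.cast_succ, ← add_assoc, hfh _ (by positivity), hgh _ (by positivity), ← ih]
    ring

lemma sub_eq_sub_of_monotoneOn_of_add_one (hf : MonotoneOn f (Ioi 0))
    (hg : MonotoneOn g (Ioi 0)) (hfh : ∀ x > 0, f (x + 1) = f x + h x)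
    (hgh : ∀ x > 0, g (x + 1) = g x + h x) (hh : Tendsto h atTop (𝓝 0))
    {x y : ℝ} (hx : 0 < x) (hy : 0 < y) : f x - g x = f y - g y := by
  have hnear : ∀ {a b : ℝ}, 0 < a → a ≤ b → b ≤ a + 1 → f a - g a = f b - g b := by
    intro a b ha hab hba
    have hbound : ∀ N : ℕ, |(f b - g b) - (f a - g a)| ≤ h (a + N) := fun N => by
      rw [← sub_add_nat_eq_of_add_one hfh hgh ha N,
        ← sub_add_nat_eq_of_add_one hfh hgh (ha.trans_le hab) N]
      exact abs_sub_sub_sub_le_of_monotoneOn hf hg hfh hgh (by positivity) (by linarith)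
        (by linarith)
    have hlim : Tendsto (fun N : ℕ => h (a + N)) atTop (𝓝 0) :=
      hh.comp (tendsto_atTop_add_const_left _ a tendsto_natCast_atTop_atTop)
    linarith [abs_nonpos_iff.1 (ge_of_tendsto' hlim hbound)]
  wlog hxy : x ≤ y generalizing x y
  · exact (this hy hx (le_of_not_ge hxy)).symm
  set N := ⌊y - x⌋₊
  rw [← sub_add_nat_eq_of_add_one hfh hgh hx N]
  exact hnear (by positivity) (by linarith [Nat.floor_le (sub_nonneg.2 hxy)])
    (by linarith [Nat.lt_floor_add_one (y - x)])

end RecurrenceUniqueness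

lemma polygamma_one_eq_hurwitzSeries {x : ℝ} (hx : 0 < x) : polygamma 1 x = hurwitzSeries 2 x := by
  have hev : digamma =ᶠ[𝓝 x] fun y => digammaSeries y + (digamma x - digammaSeries x) := by
    filter_upwards [Ioi_mem_nhds hx] with y (hy : 0 < y)
    rw [sub_eq_sub_of_monotoneOn_of_add_one digamma_monotoneOn digammaSeries_monotoneOn
      (fun _ => digamma_add_one) (fun _ => digammaSeries_add_one)
      (tendsto_inv_atTop_zero.congr fun y => (one_div y).symm) hx hy]
    ring
  rw [polygamma, iteratedDeriv_one, hev.deriv_eq, ((hasDerivAt_digammaSeries hx).add_const _).deriv]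

lemma polygamma_succ_eq_hurwitzSeries (j : ℕ) {x : ℝ} (hx : 0 < x) :
    polygamma (j + 1) x = (-1) ^ j * (j + 1)! * hurwitzSeries (j + 2) x := by
  induction j generalizing x with
  | zero => simpa using polygamma_one_eq_hurwitzSeries hx
  | succ j ih =>
    have hev : polygamma (j + 1) =ᶠ[𝓝 x]
        fun y => (-1) ^ j * (j + 1)! * hurwitzSeries (j + 2) y := by
      filter_upwards [Ioi_mem_nhds hx] with y hy using ih hy
    rw [polygamma, iteratedDeriv_succ, ← polygamma, hev.deriv_eq,
      ((hasDerivAt_hurwitzSeries (by omega) hx).const_mul _).deriv, Nat.factorial_succ (j + 1)]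
    push_cast
    ring

lemma pow_mul_abs_polygamma_succ (j : ℕ) {x : ℝ} (hx : 0 < x) :
    x ^ (j + 2) * |polygamma (j + 1) x| = (j + 1)! * ∑' n : ℕ, (x / ((n : ℝ) + x)) ^ (j + 2) := by
  rw [polygamma_succ_eq_hurwitzSeries j hx, abs_mul, abs_mul, abs_pow, abs_neg, abs_one, one_pow,
    one_mul, Nat.abs_cast, abs_of_pos (hurwitzSeries_pos (by omega) hx), hurwitzSeries,
    ← tsum_mul_left, ← tsum_mul_left, ← tsum_mul_left]
  congr 1 with n
  rw [div_pow]
  ring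

lemma div_nat_add_le_div_nat_add (n : ℕ) {x y : ℝ} (hx : 0 < x) (hxy : x ≤ y) :
    x / ((n : ℝ) + x) ≤ y / ((n : ℝ) + y) := by
  rw [div_le_div_iff₀ (by positivity) (by linarith)]
  nlinarith [n.cast_nonneg (α := ℝ)]

lemma strictMonoOn_tsum_div_nat_add_pow {k : ℕ} (hk : 2 ≤ k) :
    StrictMonoOn (fun x : ℝ => ∑' n : ℕ, (x / ((n : ℝ) + x)) ^ k) (Ioi 0) := by
  intro x (hx : 0 < x) y (hy : 0 < y) hxy
  have hsummable : Summable fun n : ℕ => (y / ((n : ℝ) + y)) ^ k :=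
    ((summable_one_div_nat_add_pow hk hy).mul_left (y ^ k)).congr fun n => by
      rw [div_pow, mul_one_div]
  have hlt : x / ((1 : ℕ) + x) < y / ((1 : ℕ) + y) := by
    rw [div_lt_div_iff₀ (by positivity) (by positivity)]
    push_cast
    linarith
  exact hsummable.tsum_lt_tsum_of_nonneg (i := 1) (fun n => by positivity)
    (fun n => pow_le_pow_left₀ (by positivity) (div_nat_add_le_div_nat_add n hx hxy.le) k)
    (pow_lt_pow_left₀ hlt (by positivity) (by omega))

theorem stmt0 (i : ℕ) (hi : 0 < i) :
    StrictMonoOn (fun x : ℝ => x ^ (i + 1) * |polygamma i x|) (Set.Ioi 0) := by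
  obtain ⟨j, rfl⟩ : ∃ j, i = j + 1 := ⟨i - 1, by omega⟩
  intro x (hx : 0 < x) y (hy : 0 < y) hxy
  show x ^ (j + 2) * _ < y ^ (j + 2) * _
  rw [pow_mul_abs_polygamma_succ j hx, pow_mul_abs_polygamma_succ j hy]
  exact mul_lt_mul_of_pos_left
    (strictMonoOn_tsum_div_nat_add_pow le_add_self hx hy hxy) (by positivity)
end

section
/- For every positive integer i and real α, the function x ↦ x^α · |ψ^(i)(x)| is strictly decreasing on (0, ∞) if and only if α ≤ i. -/
/-!
For `x > 0` and `i ≥ 1` we have `|ψ^(i)(x)| = i! ζ(i+1, x)`, where `ζ(m, x) = ∑ₙ (n + x)⁻ᵐ` is the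
Hurwitz zeta function (`hurwitz`). This comes from differentiating the Bohr–Mollerup limit
`log Γ = lim logGammaSeq` term by term, which gives `ψ(x) = -γ + ∑ₙ (1/(n+1) - 1/(n+x))`.

Writing `x^α ζ(i+1, x) = x^(α-i) · x^i ζ(i+1, x)`, it suffices for `α ≤ i` that `x^i ζ(i+1, x)` is
strictly decreasing. Its derivative is `x^(i-1) φ(x)` with `φ(x) = i ζ(i+1, x) - (i+1) x ζ(i+2, x)`.
The recursion `ζ(m, x) = x⁻ᵐ + ζ(m, x+1)` together with the telescoping bound
`(i+1) ζ(i+2, x+1) < x^-(i+1)` gives `φ(x) < φ(x+1)`, while `φ(x+n) ≤ i ζ(i+1, x+n) → 0`; hence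
`φ < 0`. Conversely `i ζ(i+1, x) ≥ x⁻ⁱ`, so for `α > i` the function grows like `x^(α-i)`.
-/

open Filter Topology Set

lemma hasDerivAt_inv_pow (m : ℕ) {t : ℝ} (ht : t ≠ 0) :
    HasDerivAt (fun t : ℝ => (t ^ m)⁻¹) (-(m * (t ^ (m + 1))⁻¹)) t := by
  have := hasDerivAt_zpow (-(m : ℤ)) t (Or.inl ht)
  simp only [zpow_neg, zpow_natCast] at this
  refine this.congr_deriv ?_
  rw [show -(m : ℤ) - 1 = -((m + 1 : ℕ) : ℤ) by push_cast; ring, zpow_neg, zpow_natCast]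
  push_cast
  ring

lemma hasDerivAt_inv_pow_add (m : ℕ) (c : ℝ) {y : ℝ} (hy : c + y ≠ 0) :
    HasDerivAt (fun y : ℝ => ((c + y) ^ m)⁻¹) (-(m * ((c + y) ^ (m + 1))⁻¹)) y :=
  (hasDerivAt_inv_pow m hy).comp_const_add c y

lemma inv_pow_sub_inv_add_one_pow_bounds {m : ℕ} (hm : m ≠ 0) {a : ℝ} (ha : 0 < a) :
    m * ((a + 1) ^ (m + 1))⁻¹ < (a ^ m)⁻¹ - ((a + 1) ^ m)⁻¹ ∧
      (a ^ m)⁻¹ - ((a + 1) ^ m)⁻¹ < m * (a ^ (m + 1))⁻¹ := by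
  have hconv : StrictConvexOn ℝ (Ioi 0) fun t : ℝ => (t ^ m)⁻¹ := by
    simpa only [zpow_neg, zpow_natCast] using
      strictConvexOn_zpow (m := -(m : ℤ)) (by omega) (by omega)
  have hslope : slope (fun t : ℝ => (t ^ m)⁻¹) a (a + 1) = ((a + 1) ^ m)⁻¹ - (a ^ m)⁻¹ := by
    simp [slope_def_field]
  have ha1 : a + 1 ∈ Ioi (0 : ℝ) := mem_Ioi.2 (by linarith)
  constructor
  · have := hconv.slope_lt_of_hasDerivAt ha ha1 (lt_add_one a) (hasDerivAt_inv_pow m ha1.ne')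
    rw [hslope] at this
    linarith
  · have := hconv.lt_slope_of_hasDerivAt ha ha1 (lt_add_one a) (hasDerivAt_inv_pow m ha.ne')
    rw [hslope] at this
    linarith

lemma Antitone.hasSum_sub_succ {f : ℕ → ℝ} (hf : Antitone f) (hlim : Tendsto f atTop (𝓝 0)) :
    HasSum (fun n => f n - f (n + 1)) (f 0) := by
  rw [hasSum_iff_tendsto_nat_of_nonneg (fun n => sub_nonneg.2 (hf n.le_succ))]
  simp_rw [Finset.sum_range_sub']
  simpa using hlim.const_sub (f 0)

noncomputable def hurwitz (m : ℕ) (x : ℝ) : ℝ := ∑' n : ℕ, ((n + x) ^ m)⁻¹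

section Hurwitz

variable {m : ℕ} {x : ℝ}

lemma summable_inv_pow_nat_add (hm : 2 ≤ m) (hx : 0 < x) :
    Summable fun n : ℕ => ((n + x) ^ m)⁻¹ := by
  have h := (Real.summable_one_div_nat_add_rpow x m).2 (by exact_mod_cast hm)
  refine h.congr fun n => ?_
  rw [abs_of_pos (by positivity), Real.rpow_natCast, one_div]

lemma hurwitz_pos (hm : 2 ≤ m) (hx : 0 < x) : 0 < hurwitz m x :=
  (summable_inv_pow_nat_add hm hx).tsum_pos (fun n => by positivity) 0 (by positivity)

lemma hurwitz_eq_inv_pow_add_hurwitz_add_one (hm : 2 ≤ m) (hx : 0 < x) :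
    hurwitz m x = (x ^ m)⁻¹ + hurwitz m (x + 1) := by
  rw [hurwitz, (summable_inv_pow_nat_add hm hx).tsum_eq_zero_add, hurwitz]
  simp only [Nat.cast_zero, zero_add, Nat.cast_succ]
  congr 2 with n
  ring

lemma tendsto_hurwitz_add_nat_atTop :
    Tendsto (fun N : ℕ => hurwitz m (x + N)) atTop (𝓝 0) := by
  convert tendsto_sum_nat_add fun n : ℕ => ((n + x) ^ m)⁻¹ using 2 with N
  rw [hurwitz]
  congr with n
  push_cast
  ring

lemma hasSum_inv_pow_sub_inv_pow_add_one (hm : m ≠ 0) (hx : 0 < x) :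
    HasSum (fun n : ℕ => ((n + x) ^ m)⁻¹ - ((n + 1 + x) ^ m)⁻¹) (x ^ m)⁻¹ := by
  have hanti : Antitone fun n : ℕ => ((n + x) ^ m)⁻¹ := by
    refine antitone_nat_of_succ_le fun n => ?_
    gcongr
    linarith
  have hlim : Tendsto (fun n : ℕ => ((n + x) ^ m)⁻¹) atTop (𝓝 0) :=
    ((tendsto_pow_atTop hm).comp
      (tendsto_atTop_add_const_right _ x tendsto_natCast_atTop_atTop)).inv_tendsto_atTop
  simpa using hanti.hasSum_sub_succ hlim

lemma inv_pow_le_mul_hurwitz (hm : m ≠ 0) (hx : 0 < x) :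
    (x ^ m)⁻¹ ≤ m * hurwitz (m + 1) x := by
  rw [hurwitz, ← tsum_mul_left]
  refine hasSum_le (fun n => ?_) (hasSum_inv_pow_sub_inv_pow_add_one hm hx)
    ((summable_inv_pow_nat_add (by omega) hx).mul_left _).hasSum
  rw [show (n : ℝ) + 1 + x = n + x + 1 by ring]
  exact (inv_pow_sub_inv_add_one_pow_bounds hm (a := n + x) (by positivity)).2.le

lemma mul_hurwitz_add_one_lt_inv_pow (hm : m ≠ 0) (hx : 0 < x) :
    m * hurwitz (m + 1) (x + 1) < (x ^ m)⁻¹ := by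
  rw [hurwitz, ← tsum_mul_left]
  have hterm : ∀ n : ℕ, m * ((n + (x + 1)) ^ (m + 1))⁻¹ < ((n + x) ^ m)⁻¹ - ((n + 1 + x) ^ m)⁻¹ :=
    fun n => by
      rw [show (n : ℝ) + 1 + x = n + x + 1 by ring, ← add_assoc]
      exact (inv_pow_sub_inv_add_one_pow_bounds hm (a := n + x) (by positivity)).1
  exact hasSum_lt (fun n => (hterm n).le) (hterm 0)
    ((summable_inv_pow_nat_add (by omega) (by positivity)).mul_left _).hasSum
    (hasSum_inv_pow_sub_inv_pow_add_one hm hx)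

lemma hasDerivAt_hurwitz (hm : 2 ≤ m) (hx : 0 < x) :
    HasDerivAt (hurwitz m) (-(m * hurwitz (m + 1) x)) x := by
  have hmem : x ∈ Ioi (x / 2) := mem_Ioi.2 (by linarith)
  have key := hasDerivAt_tsum_of_isPreconnected
    (g := fun (n : ℕ) (y : ℝ) => ((n + y) ^ m)⁻¹)
    (g' := fun (n : ℕ) (y : ℝ) => -(m * ((n + y) ^ (m + 1))⁻¹))
    ((summable_inv_pow_nat_add (m := m + 1) (by omega) (half_pos hx)).mul_left (m : ℝ)) isOpen_Ioi
    isPreconnected_Ioi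
    (fun n y (hy : x / 2 < y) => hasDerivAt_inv_pow_add m n (by linarith [n.cast_nonneg (α := ℝ)]))
    (fun n y (hy : x / 2 < y) => by
      have : 0 < x / 2 := half_pos hx
      have : 0 < y := this.trans hy
      rw [norm_neg, Real.norm_of_nonneg (by positivity)]
      gcongr)
    hmem (summable_inv_pow_nat_add hm hx) hmem
  rwa [tsum_neg, tsum_mul_left] at key

end Hurwitz

lemma StrictMono.neg_of_le_of_tendsto_zero {a u : ℕ → ℝ} (ha : StrictMono a) (hle : ∀ n, a n ≤ u n)
    (hu : Tendsto u atTop (𝓝 0)) : a 0 < 0 :=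
  (ha zero_lt_one).trans_le <|
    ge_of_tendsto hu (eventually_atTop.2 ⟨1, fun _ hn => (ha.monotone hn).trans (hle _)⟩)

section PowMulHurwitz

variable {m : ℕ} {x : ℝ}

lemma mul_hurwitz_lt_mul_hurwitz_succ (hm : m ≠ 0) (hx : 0 < x) :
    m * hurwitz (m + 1) x < (m + 1) * x * hurwitz (m + 2) x := by
  set φ : ℝ → ℝ := fun y => m * hurwitz (m + 1) y - (m + 1) * y * hurwitz (m + 2) y with hφ
  have hstep : ∀ y : ℝ, 0 < y → φ y < φ (y + 1) := fun y hy => by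
    have h1 := hurwitz_eq_inv_pow_add_hurwitz_add_one (m := m + 1) (by omega) hy
    have h2 := hurwitz_eq_inv_pow_add_hurwitz_add_one (m := m + 2) (by omega) hy
    have hlt := mul_hurwitz_add_one_lt_inv_pow (m := m + 1) (by omega) hy
    have hpow : y * (y ^ (m + 2))⁻¹ = (y ^ (m + 1))⁻¹ := by
      field_simp
      ring
    push_cast at hlt
    simp only [hφ, h1, h2]
    linear_combination hlt - (m + 1 : ℝ) * hpow
  have hmono : StrictMono fun n : ℕ => φ (x + n) :=
    strictMono_nat_of_lt_succ fun n => by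
      simpa [add_assoc] using hstep (x + n) (by positivity)
  have hle : ∀ n : ℕ, φ (x + n) ≤ m * hurwitz (m + 1) (x + n) := fun n => by
    have : 0 ≤ (m + 1) * (x + n) * hurwitz (m + 2) (x + n) :=
      mul_nonneg (by positivity) (hurwitz_pos (by omega) (by positivity)).le
    simp only [hφ]
    linarith
  have := hmono.neg_of_le_of_tendsto_zero hle
    (by simpa using tendsto_hurwitz_add_nat_atTop.const_mul (m : ℝ))
  simp only [hφ, Nat.cast_zero, add_zero] at this
  linarith

lemma strictAntiOn_pow_mul_hurwitz (hm : m ≠ 0) :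
    StrictAntiOn (fun x : ℝ => x ^ m * hurwitz (m + 1) x) (Ioi 0) := by
  have hderiv : ∀ x : ℝ, 0 < x → HasDerivAt (fun x : ℝ => x ^ m * hurwitz (m + 1) x)
      (x ^ (m - 1) * (m * hurwitz (m + 1) x - (m + 1) * x * hurwitz (m + 2) x)) x :=
    fun x hx => by
      refine ((hasDerivAt_pow m x).mul (hasDerivAt_hurwitz (by omega) hx)).congr_deriv ?_
      rw [← pow_sub_one_mul hm x]
      push_cast
      ring
  refine strictAntiOn_of_deriv_neg (convex_Ioi 0)
    (fun x hx => (hderiv x hx).continuousAt.continuousWithinAt) fun x hx => ?_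
  rw [interior_Ioi] at hx
  rw [(hderiv x hx).deriv]
  exact mul_neg_of_pos_of_neg (pow_pos hx _)
    (sub_neg.2 (mul_hurwitz_lt_mul_hurwitz_succ hm hx))

end PowMulHurwitz

section Digamma

open Real

lemma tendsto_log_sub_sum_range_succ_inv :
    Tendsto (fun n : ℕ => log n - ∑ m ∈ Finset.range (n + 1), ((m : ℝ) + 1)⁻¹) atTop
      (𝓝 (-eulerMascheroniConstant)) := by
  have h := (tendsto_harmonic_sub_log.add
    ((tendsto_inv_atTop_nhds_zero_nat (𝕜 := ℝ)).comp (tendsto_add_atTop_nat 1))).neg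
  rw [add_zero] at h
  refine h.congr fun n => ?_
  simp only [harmonic, Finset.sum_range_succ, Nat.cast_add, Nat.cast_one, Rat.cast_sum,
    Rat.cast_inv, Rat.cast_add, Rat.cast_natCast, Rat.cast_one, Function.comp_apply, neg_add_rev,
    neg_sub]
  ring

lemma hasDerivAt_logGammaSeq (n : ℕ) {y : ℝ} (hy : 0 < y) :
    HasDerivAt (fun y => BohrMollerup.logGammaSeq y n)
      (log n - ∑ m ∈ Finset.range (n + 1), (y + m)⁻¹) y := by
  have hlog : ∀ m ∈ Finset.range (n + 1),
      HasDerivAt (fun y => log (y + m)) (y + m)⁻¹ y := fun m _ => by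
    simpa using ((hasDerivAt_id y).add_const (m : ℝ)).log (by positivity)
  unfold BohrMollerup.logGammaSeq
  simpa using (((hasDerivAt_id y).mul_const (log n)).add_const _).fun_sub
    (HasDerivAt.fun_sum hlog)

lemma abs_inv_add_one_sub_inv_add_le {a b y : ℝ} (ha : 0 < a) (hy : y ∈ Icc a b) (n : ℕ) :
    |((n : ℝ) + 1)⁻¹ - (n + y)⁻¹| ≤ (b + 1) * ((((n : ℝ) + 1) ^ 2)⁻¹ + ((n + a) ^ 2)⁻¹) := by
  obtain ⟨hay, hyb⟩ := hy
  have hy0 : 0 < y := ha.trans_le hay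
  set p := ((n : ℝ) + 1)⁻¹
  set q := ((n : ℝ) + y)⁻¹
  have hp : 0 < p := by positivity
  have hq : 0 < q := by positivity
  have hpq : p - q = (y - 1) * (p * q) := by
    simp only [p, q]
    field_simp
    ring
  have hq2 : q ^ 2 ≤ ((n + a) ^ 2)⁻¹ := by
    rw [← inv_pow]
    exact pow_le_pow_left₀ hq.le (inv_anti₀ (by positivity) (by linarith)) 2
  have hp2 : p ^ 2 = (((n : ℝ) + 1) ^ 2)⁻¹ := inv_pow _ _
  have habs : |y - 1| ≤ b + 1 := abs_le.2 ⟨by linarith, by linarith⟩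
  calc |p - q| = |y - 1| * (p * q) := by rw [hpq, abs_mul, abs_of_pos (mul_pos hp hq)]
    _ ≤ (b + 1) * (p ^ 2 + q ^ 2) :=
      mul_le_mul habs (by nlinarith [sq_nonneg (p - q)]) (by positivity) (by linarith)
    _ ≤ (b + 1) * ((((n : ℝ) + 1) ^ 2)⁻¹ + ((n + a) ^ 2)⁻¹) := by
      rw [hp2]
      gcongr
      linarith

lemma hasSumLocallyUniformlyOn_inv_add_one_sub_inv_add :
    HasSumLocallyUniformlyOn (fun (n : ℕ) (y : ℝ) => ((n : ℝ) + 1)⁻¹ - (n + y)⁻¹)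
      (fun y : ℝ => ∑' n : ℕ, (((n : ℝ) + 1)⁻¹ - (n + y)⁻¹)) (Ioi 0) := by
  refine hasSumLocallyUniformlyOn_of_of_forall_exists_nhds fun x (hx : 0 < x) =>
    ⟨Icc (x / 2) (x + 1), mem_nhdsWithin_of_mem_nhds (Icc_mem_nhds (by linarith) (by linarith)),
      HasSumUniformlyOn.of_norm_le_summable ?_
        fun n y hy => abs_inv_add_one_sub_inv_add_le (half_pos hx) hy n⟩
  refine Summable.mul_left _ (Summable.add ?_ ?_)
  · simpa using summable_inv_pow_nat_add (m := 2) le_rfl one_pos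
  · exact summable_inv_pow_nat_add le_rfl (half_pos hx)

lemma hasDerivAt_log_Gamma {x : ℝ} (hx : 0 < x) :
    HasDerivAt (fun y => log (Gamma y))
      (-eulerMascheroniConstant + ∑' n : ℕ, (((n : ℝ) + 1)⁻¹ - (n + x)⁻¹)) x := by
  have hconst := (tendsto_log_sub_sum_range_succ_inv.tendstoUniformlyOn_const
    (Ioi (0 : ℝ))).tendstoLocallyUniformlyOn
  have hseries : TendstoLocallyUniformlyOn
      (fun (n : ℕ) (y : ℝ) => ∑ m ∈ Finset.range (n + 1), (((m : ℝ) + 1)⁻¹ - (m + y)⁻¹))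
      (fun y : ℝ => ∑' n : ℕ, (((n : ℝ) + 1)⁻¹ - (n + y)⁻¹)) atTop (Ioi 0) := fun u hu y hy => by
    obtain ⟨t, ht, h⟩ :=
      hasSumLocallyUniformlyOn_inv_add_one_sub_inv_add.tendstoLocallyUniformlyOn_finsetRange
        u hu y hy
    exact ⟨t, ht, (tendsto_add_atTop_nat 1).eventually h⟩
  refine hasDerivAt_of_tendstoLocallyUniformlyOn isOpen_Ioi ((hconst.add hseries).congr ?_)
    (.of_forall fun n y hy => hasDerivAt_logGammaSeq n hy)
    (fun y hy => BohrMollerup.tendsto_log_gamma hy) hx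
  intro n y _
  simp only [Pi.add_apply, Finset.sum_sub_distrib, add_comm (y : ℝ)]
  ring

lemma hasDerivAt_tsum_inv_add_one_sub_inv_add {x : ℝ} (hx : 0 < x) :
    HasDerivAt (fun y : ℝ => ∑' n : ℕ, (((n : ℝ) + 1)⁻¹ - (n + y)⁻¹)) (hurwitz 2 x) x := by
  have hmem : x ∈ Ioi (x / 2) := mem_Ioi.2 (by linarith)
  exact hasDerivAt_tsum_of_isPreconnected
    (g := fun (n : ℕ) (y : ℝ) => ((n : ℝ) + 1)⁻¹ - (n + y)⁻¹)
    (g' := fun (n : ℕ) (y : ℝ) => (((n : ℝ) + y) ^ 2)⁻¹)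
    (summable_inv_pow_nat_add le_rfl (half_pos hx)) isOpen_Ioi isPreconnected_Ioi
    (fun n y (hy : x / 2 < y) => by
      simpa using (hasDerivAt_inv_pow_add 1 n (by linarith [n.cast_nonneg (α := ℝ)])).const_sub
        ((n : ℝ) + 1)⁻¹)
    (fun n y (hy : x / 2 < y) => by
      have : 0 < x / 2 := half_pos hx
      have : 0 < y := this.trans hy
      rw [Real.norm_of_nonneg (by positivity)]
      gcongr)
    hmem ((hasSumLocallyUniformlyOn_inv_add_one_sub_inv_add.hasSum hx).summable) hmem

lemma hasDerivAt_digamma {x : ℝ} (hx : 0 < x) : HasDerivAt digamma (hurwitz 2 x) x := by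
  have hev : (fun y : ℝ => -eulerMascheroniConstant + ∑' n : ℕ, (((n : ℝ) + 1)⁻¹ - (n + y)⁻¹))
      =ᶠ[𝓝 x] digamma := by
    filter_upwards [isOpen_Ioi.mem_nhds hx] with y (hy : 0 < y)
    exact (hasDerivAt_log_Gamma hy).deriv.symm
  exact ((hasDerivAt_tsum_inv_add_one_sub_inv_add hx).const_add _).congr_of_eventuallyEq hev.symm

end Digamma

section Polygamma

open Nat

lemma polygamma_succ_eq_deriv (j : ℕ) : polygamma (j + 1) = deriv (polygamma j) := by
  simp only [polygamma, iteratedDeriv_succ]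

lemma hasDerivAt_polygamma (j : ℕ) {x : ℝ} (hx : 0 < x) :
    HasDerivAt (polygamma j) ((-1) ^ j * (j + 1)! * hurwitz (j + 2) x) x := by
  induction j generalizing x with
  | zero => simpa [polygamma] using hasDerivAt_digamma hx
  | succ j ih =>
    have hev : (fun y => (-1) ^ j * (j + 1)! * hurwitz (j + 2) y) =ᶠ[𝓝 x] polygamma (j + 1) := by
      filter_upwards [isOpen_Ioi.mem_nhds hx] with y (hy : 0 < y)
      rw [polygamma_succ_eq_deriv, (ih hy).deriv]
    refine (((hasDerivAt_hurwitz (by omega) hx).const_mul _).congr_of_eventuallyEq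
      hev.symm).congr_deriv ?_
    push_cast [factorial_succ]
    ring

lemma abs_polygamma {i : ℕ} (hi : i ≠ 0) {x : ℝ} (hx : 0 < x) :
    |polygamma i x| = i ! * hurwitz (i + 1) x := by
  obtain ⟨j, rfl⟩ := exists_eq_succ_of_ne_zero hi
  rw [polygamma_succ_eq_deriv, (hasDerivAt_polygamma j hx).deriv, abs_mul, abs_mul, abs_pow,
    abs_neg, abs_one, one_pow, one_mul, abs_of_pos (hurwitz_pos (by omega) hx), Nat.abs_cast]

end Polygamma

lemma strictAntiOn_const_mul_iff {β : Type*} [Preorder β] {f : β → ℝ} {s : Set β} {c : ℝ}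
    (hc : 0 < c) : StrictAntiOn (fun x => c * f x) s ↔ StrictAntiOn f s :=
  ⟨fun h _ ha _ hb hab => (mul_lt_mul_iff_right₀ hc).1 (h ha hb hab),
    fun h _ ha _ hb hab => mul_lt_mul_of_pos_left (h ha hb hab) hc⟩

section RpowMulHurwitz

variable {m : ℕ} {α : ℝ}

lemma tendsto_rpow_mul_hurwitz_atTop (hm : m ≠ 0) (hα : m < α) :
    Tendsto (fun x : ℝ => x ^ α * hurwitz (m + 1) x) atTop atTop := by
  have hm0 : (0 : ℝ) < m := by positivity
  refine tendsto_atTop_mono' _ ?_ ((tendsto_rpow_atTop (sub_pos.2 hα)).atTop_div_const hm0)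
  filter_upwards [eventually_gt_atTop 0] with x hx
  calc x ^ (α - m) / m = x ^ α * ((x ^ m)⁻¹ / m) := by
        rw [Real.rpow_sub hx, Real.rpow_natCast]
        ring
    _ ≤ x ^ α * hurwitz (m + 1) x := by
        gcongr
        rw [div_le_iff₀' hm0]
        exact inv_pow_le_mul_hurwitz hm hx

lemma strictAntiOn_rpow_mul_hurwitz_iff (hm : m ≠ 0) :
    StrictAntiOn (fun x : ℝ => x ^ α * hurwitz (m + 1) x) (Ioi 0) ↔ α ≤ m := by
  constructor
  · intro h
    by_contra! hα
    obtain ⟨y, hy, hy1⟩ := (((tendsto_rpow_mul_hurwitz_atTop hm hα).eventually_gt_atTop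
      ((1 : ℝ) ^ α * hurwitz (m + 1) 1)).and (eventually_gt_atTop 1)).exists
    exact (h (mem_Ioi.2 one_pos) (mem_Ioi.2 (one_pos.trans hy1)) hy1).not_gt hy
  · intro hα x (hx : 0 < x) y (hy : 0 < y) hxy
    have hsplit : ∀ z : ℝ, 0 < z →
        z ^ α * hurwitz (m + 1) z = z ^ (α - m) * (z ^ m * hurwitz (m + 1) z) := fun z hz => by
      rw [← mul_assoc, ← Real.rpow_natCast, ← Real.rpow_add hz, sub_add_cancel]
    dsimp only
    rw [hsplit x hx, hsplit y hy]
    exact mul_lt_mul' (Real.rpow_le_rpow_of_nonpos hx hxy.le (by linarith))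
      (strictAntiOn_pow_mul_hurwitz hm hx hy hxy)
      (mul_pos (pow_pos hy m) (hurwitz_pos (by omega) hy)).le (Real.rpow_pos_of_pos hx _)

end RpowMulHurwitz

theorem stmt3 (i : ℕ) (hi : 0 < i) (α : ℝ) :
    StrictAntiOn (fun x : ℝ => x ^ α * |polygamma i x|) (Set.Ioi 0) ↔ α ≤ (i : ℝ) := by
  have heq : EqOn (fun x : ℝ => x ^ α * |polygamma i x|)
      (fun x => (i.factorial : ℝ) * (x ^ α * hurwitz (i + 1) x)) (Ioi 0) := fun x (hx : 0 < x) => by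
    simp only [abs_polygamma hi.ne' hx]
    ring
  rw [heq.congr_strictAntiOn, strictAntiOn_const_mul_iff (by positivity),
    strictAntiOn_rpow_mul_hurwitz_iff hi.ne']
end
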